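/- Let d ≥ 1 be an integer and 0 ≤ i ≤ d. Let (a_n)_{n∈ℕ} be a real sequence with a_n → a ∈ ℝ such that 1 + d·a_n > 0 for all n and 1 + d·a > 0. Then lim_{n→∞} ∫_{ℝ^d} Π(λ)·𝟙_{O_i}(λ)·f_{a_n}(λ) dλ = ∫_{ℝ^d} Π(λ)·𝟙_{O_i}(λ)·f_a(λ) dλ. (Lemma 4.2: continuity in the covariance parameter of the GOI expectation.) -/

import Mathlib

/-!
Continuity of `c ↦ GOIint d i c` at every `A` with `1 + d A > 0` follows by dominated
convergence. Near `A` the quantity `1 + d c` stays in an interval `[m, M]` with `m > 0`,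
`M ≥ 1`; there the exponent of `f_c` is at most `-‖λ‖² / (2M)` (by `(∑ λ_j)² ≤ d ‖λ‖²` when
`c ≥ 0`), while `Π(λ) Δ(λ) ≤ ∏ (1 + |λ_j|)^(2d+1) ≤ exp (‖λ‖² / (4M) + const)`. So all
integrands are dominated by one Gaussian `C exp (-‖λ‖² / (4M))`.
-/

open MeasureTheory Filter Real

/-- `K_d := 2^{d/2} ∏_{j=1}^d Γ(j/2)`. -/
noncomputable def Kd (d : ℕ) : ℝ :=
  2 ^ ((d : ℝ) / 2) * ∏ j ∈ Finset.Icc 1 d, Real.Gamma ((j : ℝ) / 2)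

/-- `Π(λ) := ∏_{j=1}^d |λ_j|`. -/
noncomputable def PiAbs (d : ℕ) (lam : Fin d → ℝ) : ℝ := ∏ j, |lam j|

/-- `Δ(λ) := ∏_{1 ≤ h < k ≤ d} |λ_h − λ_k|`. -/
noncomputable def DeltaV (d : ℕ) (lam : Fin d → ℝ) : ℝ :=
  ∏ h : Fin d, ∏ k : Fin d, if h < k then |lam h - lam k| else 1

/-- The density of the ordered eigenvalues of a GOI(c) matrix. -/
noncomputable def fGOI (d : ℕ) (c : ℝ) (lam : Fin d → ℝ) : ℝ :=
  (Kd d * Real.sqrt (1 + d * c))⁻¹ * DeltaV d lam *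
    Real.exp (-(∑ j, lam j ^ 2) / 2 + c * (∑ j, lam j) ^ 2 / (2 * (1 + d * c))) *
    Set.indicator {x : Fin d → ℝ | Monotone x} (fun _ => 1) lam

/-- `O_i := {λ : λ_i < 0 < λ_{i+1}}` with conventions `λ_0 = −∞`, `λ_{d+1} = +∞`
(one-based indexing; coordinates here are zero-based). -/
def Oi (d i : ℕ) : Set (Fin d → ℝ) :=
  {lam | (∀ j : Fin d, (j : ℕ) + 1 = i → lam j < 0) ∧ (∀ j : Fin d, (j : ℕ) = i → 0 < lam j)}

/-- `∫_{ℝ^d} Π(λ)·𝟙_{O_i}(λ)·f_c(λ) dλ`. -/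
noncomputable def GOIint (d i : ℕ) (c : ℝ) : ℝ :=
  ∫ lam : Fin d → ℝ,
    PiAbs d lam * Set.indicator (Oi d i) (fun _ => 1) lam * fGOI d c lam

lemma Kd_pos (d : ℕ) : 0 < Kd d := by
  refine mul_pos (by positivity) (Finset.prod_pos fun j hj => Real.Gamma_pos_of_pos ?_)
  have : (1 : ℝ) ≤ j := by exact_mod_cast (Finset.mem_Icc.mp hj).1
  positivity

lemma PiAbs_nonneg (d : ℕ) (lam : Fin d → ℝ) : 0 ≤ PiAbs d lam :=
  Finset.prod_nonneg fun _ _ => abs_nonneg _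

lemma DeltaV_nonneg (d : ℕ) (lam : Fin d → ℝ) : 0 ≤ DeltaV d lam :=
  Finset.prod_nonneg fun _ _ => Finset.prod_nonneg fun _ _ => by split <;> positivity

lemma continuous_DeltaV (d : ℕ) : Continuous (DeltaV d) :=
  continuous_finsetProd _ fun h _ => continuous_finsetProd _ fun k _ => by
    split <;> fun_prop

lemma measurableSet_Oi (d i : ℕ) : MeasurableSet (Oi d i) := by
  simp only [Oi, Set.ofPred_and, Set.ofPred_forall]
  measurability

lemma measurable_fGOI (d : ℕ) (c : ℝ) : Measurable (fGOI d c) := by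
  have := (continuous_DeltaV d).measurable
  unfold fGOI
  fun_prop (disch := exact isClosed_monotone.measurableSet)

lemma mul_abs_le_mul_sq_add (k x : ℝ) {t : ℝ} (ht : 0 < t) :
    k * |x| ≤ t * x ^ 2 + k ^ 2 / (4 * t) := by
  rw [← sub_nonneg]
  have key : t * x ^ 2 + k ^ 2 / (4 * t) - k * |x| = (2 * t * |x| - k) ^ 2 / (4 * t) := by
    field_simp
    rw [← sq_abs x]
    ring
  rw [key]
  positivity

lemma prod_one_add_abs_le_exp_sum {ι : Type*} [Fintype ι] (x : ι → ℝ) :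
    ∏ j, (1 + |x j|) ≤ exp (∑ j, |x j|) := by
  rw [exp_sum]
  exact Finset.prod_le_prod (fun j _ => by positivity)
    fun j _ => by linarith [add_one_le_exp |x j|]

lemma abs_sub_le_one_add_abs_mul (x y : ℝ) : |x - y| ≤ (1 + |x|) * (1 + |y|) := by
  nlinarith [abs_sub x y, abs_nonneg x, abs_nonneg y, mul_nonneg (abs_nonneg x) (abs_nonneg y)]

lemma PiAbs_mul_DeltaV_le (d : ℕ) (lam : Fin d → ℝ) :
    PiAbs d lam * DeltaV d lam ≤ (∏ j, (1 + |lam j|)) ^ (2 * d + 1) := by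
  set P := ∏ j, (1 + |lam j|)
  have hPiAbs : PiAbs d lam ≤ P :=
    Finset.prod_le_prod (fun _ _ => abs_nonneg _) fun j _ => by linarith
  have hDeltaV : DeltaV d lam ≤ ∏ h, ∏ k, (1 + |lam h|) * (1 + |lam k|) :=
    Finset.prod_le_prod (fun _ _ => Finset.prod_nonneg fun _ _ => by split <;> positivity)
      fun h _ => Finset.prod_le_prod (fun _ _ => by split <;> positivity) fun k _ => by
        split
        · exact abs_sub_le_one_add_abs_mul _ _
        · nlinarith [abs_nonneg (lam h), abs_nonneg (lam k)]
  have hdouble : ∏ h, ∏ k, (1 + |lam h|) * (1 + |lam k|) = P ^ (2 * d) := by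
    simp only [Finset.prod_mul_distrib, Finset.prod_const, Finset.card_univ, Fintype.card_fin,
      Finset.prod_pow, P]
    ring
  calc PiAbs d lam * DeltaV d lam ≤ P * P ^ (2 * d) :=
        mul_le_mul hPiAbs (hDeltaV.trans hdouble.le) (DeltaV_nonneg d lam)
          (Finset.prod_nonneg fun _ _ => by positivity)
    _ = P ^ (2 * d + 1) := by ring

lemma PiAbs_mul_DeltaV_le_exp (d : ℕ) {t : ℝ} (ht : 0 < t) (lam : Fin d → ℝ) :
    PiAbs d lam * DeltaV d lam ≤ exp (t * ∑ j, lam j ^ 2 + d * (2 * d + 1) ^ 2 / (4 * t)) := by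
  have hlinear : ((2 * d + 1 : ℕ) : ℝ) * ∑ j, |lam j| ≤
      t * ∑ j, lam j ^ 2 + d * (2 * d + 1) ^ 2 / (4 * t) := by
    calc ((2 * d + 1 : ℕ) : ℝ) * ∑ j, |lam j|
        ≤ ∑ j, (t * lam j ^ 2 + ((2 * d + 1 : ℕ) : ℝ) ^ 2 / (4 * t)) := by
          rw [Finset.mul_sum]
          exact Finset.sum_le_sum fun j _ => mul_abs_le_mul_sq_add _ _ ht
      _ = _ := by
          rw [Finset.sum_add_distrib, ← Finset.mul_sum]
          simp only [Nat.cast_add, Nat.cast_mul, Nat.cast_ofNat, Nat.cast_one, Finset.sum_const,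
            Finset.card_univ, Fintype.card_fin, nsmul_eq_mul, add_right_inj]
          ring
  calc PiAbs d lam * DeltaV d lam ≤ (∏ j, (1 + |lam j|)) ^ (2 * d + 1) :=
        PiAbs_mul_DeltaV_le d lam
    _ ≤ exp (∑ j, |lam j|) ^ (2 * d + 1) :=
        pow_le_pow_left₀ (Finset.prod_nonneg fun _ _ => by positivity)
          (prod_one_add_abs_le_exp_sum lam) _
    _ ≤ _ := by
        rw [← exp_nat_mul]
        exact exp_le_exp.mpr hlinear

lemma GOI_exponent_le (d : ℕ) {c M : ℝ} (hc : 0 < 1 + d * c) (hM : 1 ≤ M) (hcM : 1 + d * c ≤ M)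
    (lam : Fin d → ℝ) :
    -(∑ j, lam j ^ 2) / 2 + c * (∑ j, lam j) ^ 2 / (2 * (1 + d * c)) ≤
      -(∑ j, lam j ^ 2) / (2 * M) := by
  set Q := ∑ j, lam j ^ 2
  set S := ∑ j, lam j
  have hQ : 0 ≤ Q := Finset.sum_nonneg fun _ _ => sq_nonneg _
  have hS : S ^ 2 ≤ d * Q := by
    simpa using sq_sum_le_card_mul_sum_sq (s := Finset.univ) (f := lam)
  have hQM : Q / M ≤ Q := div_le_self hQ hM
  have hQM' : Q / M ≤ Q / (1 + d * c) := div_le_div_of_nonneg_left hQ hc hcM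
  have key : c * S ^ 2 / (1 + d * c) ≤ Q - Q / M := by
    rcases le_or_gt 0 c with hc0 | hc0
    · have : c * S ^ 2 ≤ c * (d * Q) := mul_le_mul_of_nonneg_left hS hc0
      calc c * S ^ 2 / (1 + d * c) ≤ c * (d * Q) / (1 + d * c) := by gcongr
        _ = Q - Q / (1 + d * c) := by field_simp; ring
        _ ≤ Q - Q / M := by linarith
    · have : c * S ^ 2 / (1 + d * c) ≤ 0 :=
        div_nonpos_of_nonpos_of_nonneg (mul_nonpos_of_nonpos_of_nonneg hc0.le (sq_nonneg _)) hc.le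
      linarith
  have e1 : c * S ^ 2 / (2 * (1 + d * c)) = c * S ^ 2 / (1 + d * c) / 2 := by
    rw [div_div, mul_comm 2]
  have e2 : -Q / (2 * M) = -(Q / M) / 2 := by ring
  rw [e1, e2]
  linarith

lemma integrable_exp_neg_mul_sum_sq {ι : Type*} [Fintype ι] {b : ℝ} (hb : 0 < b) :
    Integrable fun x : ι → ℝ => exp (-b * ∑ j, x j ^ 2) := by
  simp_rw [Finset.mul_sum, exp_sum]
  exact Integrable.fintype_prod fun _ => integrable_exp_neg_mul_sq hb

lemma fGOI_nonneg (d : ℕ) (c : ℝ) (lam : Fin d → ℝ) : 0 ≤ fGOI d c lam := by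
  unfold fGOI
  have := DeltaV_nonneg d lam
  have := Kd_pos d
  have : 0 ≤ {x : Fin d → ℝ | Monotone x}.indicator (fun _ => (1 : ℝ)) lam :=
    Set.indicator_nonneg (fun _ _ => zero_le_one) _
  positivity

lemma continuousAt_fGOI (d : ℕ) {A : ℝ} (hA : 0 < 1 + d * A) (lam : Fin d → ℝ) :
    ContinuousAt (fun c => fGOI d c lam) A := by
  have hK : Kd d * √(1 + d * A) ≠ 0 := (mul_pos (Kd_pos d) (sqrt_pos.mpr hA)).ne'
  have h2 : 2 * (1 + d * A) ≠ 0 := by positivity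
  unfold fGOI
  fun_prop (disch := assumption)

lemma fGOI_le (d : ℕ) {c m M : ℝ} (hm : 0 < m) (hmc : m ≤ 1 + d * c) (hM : 1 ≤ M)
    (hcM : 1 + d * c ≤ M) (lam : Fin d → ℝ) :
    fGOI d c lam ≤ (Kd d * √m)⁻¹ * DeltaV d lam * exp (-(∑ j, lam j ^ 2) / (2 * M)) := by
  have hK := Kd_pos d
  have hDeltaV := DeltaV_nonneg d lam
  have hnorm : (Kd d * √(1 + d * c))⁻¹ ≤ (Kd d * √m)⁻¹ := by gcongr
  have hexp := exp_le_exp.mpr (GOI_exponent_le d (hm.trans_le hmc) hM hcM lam)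
  have hind : {x : Fin d → ℝ | Monotone x}.indicator (fun _ => (1 : ℝ)) lam ≤ 1 :=
    Set.indicator_apply_le' (fun _ => le_rfl) fun _ => zero_le_one
  unfold fGOI
  calc _ ≤ (Kd d * √(1 + d * c))⁻¹ * DeltaV d lam *
        exp (-(∑ j, lam j ^ 2) / 2 + c * (∑ j, lam j) ^ 2 / (2 * (1 + d * c))) * 1 := by
        gcongr
    _ ≤ _ := by
        rw [mul_one]
        gcongr

lemma PiAbs_mul_fGOI_le (d : ℕ) {c m M : ℝ} (hm : 0 < m) (hmc : m ≤ 1 + d * c) (hM : 1 ≤ M)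
    (hcM : 1 + d * c ≤ M) (lam : Fin d → ℝ) :
    PiAbs d lam * fGOI d c lam ≤
      (Kd d * √m)⁻¹ * exp (d * (2 * d + 1) ^ 2 * M) * exp (-(1 / (4 * M)) * ∑ j, lam j ^ 2) := by
  have hM0 : 0 < M := one_pos.trans_le hM
  have hpoly := PiAbs_mul_DeltaV_le_exp d (t := 1 / (4 * M)) (by positivity) lam
  have hK := Kd_pos d
  calc PiAbs d lam * fGOI d c lam
      ≤ PiAbs d lam * ((Kd d * √m)⁻¹ * DeltaV d lam * exp (-(∑ j, lam j ^ 2) / (2 * M))) :=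
        mul_le_mul_of_nonneg_left (fGOI_le d hm hmc hM hcM lam) (PiAbs_nonneg d lam)
    _ = (Kd d * √m)⁻¹ * (PiAbs d lam * DeltaV d lam) * exp (-(∑ j, lam j ^ 2) / (2 * M)) := by
        ring
    _ ≤ (Kd d * √m)⁻¹ * exp (1 / (4 * M) * ∑ j, lam j ^ 2 +
          d * (2 * d + 1) ^ 2 / (4 * (1 / (4 * M)))) * exp (-(∑ j, lam j ^ 2) / (2 * M)) := by
        gcongr
    _ = _ := by
        rw [mul_assoc, mul_assoc, ← exp_add, ← exp_add]
        congr 2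
        field_simp
        ring

theorem continuousAt_GOIint (d i : ℕ) {A : ℝ} (hA : 0 < 1 + d * A) :
    ContinuousAt (GOIint d i) A := by
  set m := (1 + d * A) / 2 with hm
  set M := 2 + d * A with hM
  have hcont : Continuous fun c : ℝ => 1 + d * c := by fun_prop
  have hnear : ∀ᶠ c : ℝ in nhds A, 1 + d * c ∈ Set.Ioo m M :=
    hcont.continuousAt.eventually (Ioo_mem_nhds (by linarith) (by linarith))
  refine continuousAt_of_dominated (bound := fun lam => (Kd d * √m)⁻¹ *
    exp (d * (2 * d + 1) ^ 2 * M) * exp (-(1 / (4 * M)) * ∑ j, lam j ^ 2)) ?_ ?_ ?_ ?_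
  · refine Eventually.of_forall fun c => Measurable.aestronglyMeasurable ?_
    have := measurable_fGOI d c
    have := measurableSet_Oi d i
    unfold PiAbs
    fun_prop (disch := assumption)
  · filter_upwards [hnear] with c hc
    refine ae_of_all _ fun lam => ?_
    have hind : (Oi d i).indicator (fun _ => (1 : ℝ)) lam ≤ 1 :=
      Set.indicator_apply_le' (fun _ => le_rfl) fun _ => zero_le_one
    have hind0 : 0 ≤ (Oi d i).indicator (fun _ => (1 : ℝ)) lam :=
      Set.indicator_nonneg (fun _ _ => zero_le_one) _
    have hPiAbs := PiAbs_nonneg d lam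
    have hf := fGOI_nonneg d c lam
    rw [Real.norm_of_nonneg (by positivity)]
    calc PiAbs d lam * (Oi d i).indicator (fun _ => 1) lam * fGOI d c lam
        ≤ PiAbs d lam * 1 * fGOI d c lam := by gcongr
      _ ≤ _ := by
        rw [mul_one]
        exact PiAbs_mul_fGOI_le d (by linarith) hc.1.le (by linarith) hc.2.le lam
  · exact (integrable_exp_neg_mul_sum_sq (one_div_pos.mpr (by linarith))).const_mul _
  · exact ae_of_all _ fun lam => continuousAt_const.mul (continuousAt_fGOI d hA lam)

theorem statement6_general (d i : ℕ) (a : ℕ → ℝ) (A : ℝ)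
    (ha : Tendsto a atTop (nhds A))
    (hA : 0 < 1 + (d : ℝ) * A) :
    Tendsto (fun n => GOIint d i (a n)) atTop (nhds (GOIint d i A)) :=
  (continuousAt_GOIint d i hA).tendsto.comp ha

/-- Lemma 4.2: continuity in the covariance parameter of the GOI expectation. -/
theorem statement6 (d i : ℕ) (hd : 1 ≤ d) (hi : i ≤ d) (a : ℕ → ℝ) (A : ℝ)
    (ha : Tendsto a atTop (nhds A)) (han : ∀ n, 0 < 1 + (d : ℝ) * a n)
    (hA : 0 < 1 + (d : ℝ) * A) :
    Tendsto (fun n => GOIint d i (a n)) atTop (nhds (GOIint d i A)) :=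
  statement6_general d i a A ha hA
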